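/- If G is a distance critical simple graph on n ≥ 6 vertices, then every vertex of G has degree at most n − 4. -/

import Mathlib

/-- A graph is *distance critical* if for every vertex `v` there is a pair of vertices of
`G − v` whose distance in `G − v` differs from their distance in `G`
(distances are `ℕ∞`-valued, `⊤` when there is no connecting path). -/
def IsDistanceCritical {V : Type*} (G : SimpleGraph V) : Prop :=
  ∀ v : V, ∃ x y : ({v}ᶜ : Set V),
    (G.induce ({v}ᶜ : Set V)).edist x y ≠ G.edist (x : V) (y : V)

/-!
Deleting a vertex `a` can only change a distance if `a` is the unique common neighbour of two
non-adjacent neighbours `p`, `q`: otherwise every passage `p - a - q` of a walk can be rerouted in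
`G - a` without getting longer. So in a distance critical graph no neighbourhood `N(a)` lies in
the closed neighbourhood `N[b]` of another vertex `b`. If `deg v ≥ n - 3`, this forces `v` to have
exactly two non-neighbours `w₁ ~ w₂`, every other vertex to be adjacent to `w₁` or `w₂`, and each
`wᵢ` to have exactly one common neighbour with `v`; hence `deg v ≤ 2 < n - 3`.
-/

namespace SimpleGraph

variable {V W : Type*} {G : SimpleGraph V} {G' : SimpleGraph W}

theorem Hom.edist_le (f : G →g G') (u v : V) : G'.edist (f u) (f v) ≤ G.edist u v := by
  by_cases hr : G.Reachable u v
  · obtain ⟨p, hp⟩ := hr.exists_walk_length_eq_edist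
    rw [← hp, ← p.length_map f]
    exact SimpleGraph.edist_le _
  · exact edist_eq_top_of_not_reachable hr ▸ le_top

theorem edist_le_edist_induce (s : Set V) (u v : s) : G.edist u v ≤ (G.induce s).edist u v :=
  (Embedding.induce s).toHom.edist_le u v

theorem edist_induce_le_one_of_adj {s : Set V} {u v : s} (h : G.Adj u v) :
    (G.induce s).edist u v ≤ 1 :=
  (edist_eq_one_iff_adj (G := G.induce s)).mpr h |>.le

theorem edist_induce_compl_singleton_le_length {a : V}
    (h : ∀ p q : ({a}ᶜ : Set V), G.Adj a p → G.Adj a q → (G.induce {a}ᶜ).edist p q ≤ 2) :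
    ∀ {u v : V} (w : G.Walk u v) (hu : u ≠ a) (hv : v ≠ a),
      (G.induce {a}ᶜ).edist ⟨u, hu⟩ ⟨v, hv⟩ ≤ w.length
  | _, _, .nil, _, _ => by simp
  | _, _, .cons huv .nil, hu, hv => by
    simpa using edist_induce_le_one_of_adj (s := {a}ᶜ) (u := ⟨_, hu⟩) (v := ⟨_, hv⟩) huv
  | u, v, .cons (v := x) hux (.cons (v := y) hxy w), hu, hv => by
    by_cases hx : x = a
    · subst hx
      have hy : y ≠ x := hxy.ne'
      calc _ ≤ (G.induce {x}ᶜ).edist ⟨u, hu⟩ ⟨y, hy⟩ + (G.induce {x}ᶜ).edist ⟨y, hy⟩ ⟨v, hv⟩ :=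
            SimpleGraph.edist_triangle
        _ ≤ 2 + w.length := by
          gcongr
          exacts [h _ _ hux.symm hxy, edist_induce_compl_singleton_le_length h w hy hv]
        _ = _ := by simp; ring
    · calc _ ≤ (G.induce {a}ᶜ).edist ⟨u, hu⟩ ⟨x, hx⟩ + (G.induce {a}ᶜ).edist ⟨x, hx⟩ ⟨v, hv⟩ :=
            SimpleGraph.edist_triangle
        _ ≤ 1 + (w.cons hxy).length := by
          gcongr
          exacts [edist_induce_le_one_of_adj (s := {a}ᶜ) (u := ⟨u, hu⟩) (v := ⟨x, hx⟩) hux,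
            edist_induce_compl_singleton_le_length h (w.cons hxy) hx hv]
        _ = _ := by simp; ring

theorem edist_induce_compl_singleton_eq {a : V}
    (h : ∀ p q : ({a}ᶜ : Set V), G.Adj a p → G.Adj a q → (G.induce {a}ᶜ).edist p q ≤ 2)
    (u v : ({a}ᶜ : Set V)) : (G.induce {a}ᶜ).edist u v = G.edist u v := by
  refine le_antisymm ?_ (edist_le_edist_induce _ u v)
  by_cases hr : G.Reachable u v
  · obtain ⟨p, hp⟩ := hr.exists_walk_length_eq_edist
    exact hp ▸ edist_induce_compl_singleton_le_length h p u.2 v.2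
  · exact edist_eq_top_of_not_reachable hr ▸ le_top

-- Equivalently: `p`, `q` are neighbours of `a` at distance greater than two in `G - a`.
structure IsUniqueMidpoint (G : SimpleGraph V) (a p q : V) : Prop where
  ne : p ≠ q
  not_adj : ¬G.Adj p q
  adj_left : G.Adj p a
  adj_right : G.Adj a q
  eq_of_adj : ∀ r, G.Adj p r → G.Adj r q → r = a

theorem IsUniqueMidpoint.symm {a p q : V} (h : G.IsUniqueMidpoint a p q) :
    G.IsUniqueMidpoint a q p :=
  ⟨h.ne.symm, fun hqp => h.not_adj hqp.symm, h.adj_right.symm, h.adj_left.symm,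
    fun r hqr hrp => h.eq_of_adj r hrp.symm hqr.symm⟩

theorem IsUniqueMidpoint.eq_of_dominates {a b p q : V} (h : G.IsUniqueMidpoint a p q)
    (hp : p = b ∨ G.Adj b p) (hq : q = b ∨ G.Adj b q) : b = a := by
  rcases hp with rfl | hp <;> rcases hq with rfl | hq
  · exact absurd rfl h.ne
  · exact absurd hq h.not_adj
  · exact absurd hp.symm h.not_adj
  · exact h.eq_of_adj b hp.symm hq

end SimpleGraph

open SimpleGraph

namespace IsDistanceCritical

variable {V : Type*} {G : SimpleGraph V}

theorem exists_isUniqueMidpoint (hG : IsDistanceCritical G) (a : V) :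
    ∃ p q, G.IsUniqueMidpoint a p q := by
  obtain ⟨x, y, hxy⟩ := hG a
  by_contra! hno
  refine hxy (edist_induce_compl_singleton_eq (fun p q hp hq => ?_) x y)
  by_contra! h2
  obtain ⟨hne, hnadj, hcommon⟩ := two_lt_edist_iff.mp h2
  refine hno p q ⟨Subtype.coe_injective.ne hne, hnadj, hp.symm, hq, fun r hpr hrq => ?_⟩
  by_contra hra
  have hr : (⟨r, hra⟩ : ({a}ᶜ : Set V)) ∈ (G.induce {a}ᶜ).commonNeighbors p q :=
    (mem_commonNeighbors _).mpr ⟨hpr, hrq.symm⟩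
  simp [hcommon] at hr

theorem exists_adj_not_dominated (hG : IsDistanceCritical G) {a b : V} (hab : a ≠ b) :
    ∃ r, G.Adj a r ∧ r ≠ b ∧ ¬G.Adj b r := by
  obtain ⟨p, q, h⟩ := hG.exists_isUniqueMidpoint a
  by_contra! hdom
  have dom : ∀ r, G.Adj a r → r = b ∨ G.Adj b r := fun r hr => or_iff_not_imp_left.mpr (hdom r hr)
  exact hab (h.eq_of_dominates (dom p h.adj_left.symm) (dom q h.adj_right)).symm

section TwoNonneighbors

variable {v w₁ w₂ : V}

theorem adj_or_adj_of_ne (hG : IsDistanceCritical G)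
    (hS : ∀ w, w ≠ v → ¬G.Adj v w → w = w₁ ∨ w = w₂) {u : V} (hu : u ≠ v) :
    G.Adj u w₁ ∨ G.Adj u w₂ := by
  obtain ⟨r, hur, hrv, hvr⟩ := hG.exists_adj_not_dominated hu
  rcases hS r hrv hvr with rfl | rfl
  · exact Or.inl hur
  · exact Or.inr hur

theorem exists_common_adj (hG : IsDistanceCritical G)
    (hS : ∀ w, w ≠ v → ¬G.Adj v w → w = w₁ ∨ w = w₂) (h12 : G.Adj w₁ w₂) (hv₁ : ¬G.Adj v w₁) :
    ∃ c, G.Adj v c ∧ G.Adj w₁ c ∧ ¬G.Adj w₂ c := by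
  obtain ⟨r, h1r, hr2, h2r⟩ := hG.exists_adj_not_dominated h12.ne
  refine ⟨r, ?_, h1r, h2r⟩
  by_contra hvr
  have hrv : r ≠ v := by rintro rfl; exact hv₁ h1r.symm
  rcases hS r hrv hvr with rfl | rfl
  · exact h1r.ne rfl
  · exact hr2 rfl

theorem eq_of_common_adj (hG : IsDistanceCritical G)
    (hS : ∀ w, w ≠ v → ¬G.Adj v w → w = w₁ ∨ w = w₂)
    (h12 : G.Adj w₁ w₂) (hv₂ : ¬G.Adj v w₂) {c d : V} (hc : G.Adj v c)
    (hc₁ : G.Adj w₁ c) (hc₂ : ¬G.Adj w₂ c) (hd : G.Adj v d) (hd₁ : G.Adj w₁ d) : d = c := by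
  obtain ⟨p, q, h⟩ := hG.exists_isUniqueMidpoint c
  have nbr : ∀ r, G.Adj c r → r = w₁ ∨ r = v ∨ G.Adj v r := by
    intro r hr
    by_cases hrv : r = v
    · exact Or.inr (Or.inl hrv)
    by_cases hvr : G.Adj v r
    · exact Or.inr (Or.inr hvr)
    rcases hS r hrv hvr with rfl | rfl
    · exact Or.inl rfl
    · exact absurd hr.symm hc₂
  have of_left : ∀ p q, G.IsUniqueMidpoint c p q → p = w₁ → d = c := by
    rintro p q h rfl
    rcases nbr q h.adj_right with rfl | rfl | hq
    · exact absurd rfl h.ne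
    · exact h.eq_of_adj d hd₁ hd.symm
    · rcases hG.adj_or_adj_of_ne hS hq.ne' with hq₁ | hq₂
      · exact absurd hq₁.symm h.not_adj
      · exact absurd (h.eq_of_adj w₂ h12 hq₂.symm ▸ hc) hv₂
  -- `p` and `q` cannot both lie in `N[v]`, so one of them is `w₁`.
  rcases nbr p h.adj_left.symm with hp | hp
  · exact of_left p q h hp
  rcases nbr q h.adj_right with hq | hq
  · exact of_left q p h.symm hq
  · exact absurd (h.eq_of_dominates hp hq) hc.ne

theorem degree_le_two [Fintype V] [DecidableRel G.Adj] (hG : IsDistanceCritical G)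
    (hS : ∀ w, w ≠ v → ¬G.Adj v w → w = w₁ ∨ w = w₂) (h12 : G.Adj w₁ w₂)
    (hv₁ : ¬G.Adj v w₁) (hv₂ : ¬G.Adj v w₂) : G.degree v ≤ 2 := by
  classical
  have hS' : ∀ w, w ≠ v → ¬G.Adj v w → w = w₂ ∨ w = w₁ := fun w hw hvw => (hS w hw hvw).symm
  obtain ⟨a, ha, ha₁, ha₂⟩ := hG.exists_common_adj hS h12 hv₁
  obtain ⟨b, hb, hb₂, hb₁⟩ := hG.exists_common_adj hS' h12.symm hv₂
  have hsub : G.neighborFinset v ⊆ {a, b} := by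
    intro u hu
    rw [mem_neighborFinset] at hu
    rcases hG.adj_or_adj_of_ne hS hu.ne' with hu₁ | hu₂
    · simp [hG.eq_of_common_adj hS h12 hv₂ ha ha₁ ha₂ hu hu₁.symm]
    · simp [hG.eq_of_common_adj hS' h12.symm hv₁ hb hb₂ hb₁ hu hu₂.symm]
  calc G.degree v = (G.neighborFinset v).card := (card_neighborFinset_eq_degree G v).symm
    _ ≤ ({a, b} : Finset V).card := Finset.card_le_card hsub
    _ ≤ 2 := Finset.card_le_two

end TwoNonneighbors

theorem exists_two_nonneighbors [Fintype V] [DecidableEq V] [DecidableRel G.Adj] [Nontrivial V]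
    (hG : IsDistanceCritical G) {v : V} (hv : Gᶜ.degree v ≤ 2) :
    ∃ w₁ w₂, (∀ w, w ≠ v → ¬G.Adj v w → w = w₁ ∨ w = w₂) ∧ G.Adj w₁ w₂ ∧
      ¬G.Adj v w₁ ∧ ¬G.Adj v w₂ := by
  obtain ⟨u, hu⟩ := exists_ne v
  obtain ⟨w₁, -, hw₁, hvw₁⟩ := hG.exists_adj_not_dominated hu
  obtain ⟨w₂, h12, hw₂, hvw₂⟩ := hG.exists_adj_not_dominated hw₁
  refine ⟨w₁, w₂, fun w hw hvw => ?_, h12, hvw₁, hvw₂⟩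
  have hpair : ({w₁, w₂} : Finset V) = Gᶜ.neighborFinset v := by
    refine Finset.eq_of_subset_of_card_le (fun x hx => ?_) ?_
    · rw [Finset.mem_insert, Finset.mem_singleton] at hx
      rcases hx with rfl | rfl <;> simp [*, Ne.symm]
    · rw [Finset.card_pair h12.ne, card_neighborFinset_eq_degree]
      exact hv
  have hw' : w ∈ Gᶜ.neighborFinset v := by simp [hw.symm, hvw]
  simpa [← hpair] using hw'

end IsDistanceCritical

theorem stmt_15 {V : Type*} [Fintype V] (G : SimpleGraph V) [DecidableRel G.Adj]
    (hn : 6 ≤ Fintype.card V) (hG : IsDistanceCritical G) :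
    ∀ v : V, G.degree v ≤ Fintype.card V - 4 := by
  classical
  intro v
  by_contra! hdeg
  have : Nontrivial V := Fintype.one_lt_card_iff_nontrivial.mp (by omega)
  obtain ⟨w₁, w₂, hS, h12, hv₁, hv₂⟩ :=
    hG.exists_two_nonneighbors (v := v) (by rw [degree_compl]; omega)
  have := hG.degree_le_two hS h12 hv₁ hv₂
  omega
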